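/- arXiv:2311.06853 — 5 statements merged into one kernel-verified Lean document; each statement's English description precedes it below -/
import Mathlib

section
/- Let φ: G → G be an endomorphism and H a subgroup of G such that φ(H) ⊆ H and for every x ∈ G there exists n > 0 with φⁿ(x) ∈ H. Then the inclusion H ↪ G induces a bijection between the twisted conjugacy classes of the restriction φ_H: H → H and the twisted conjugacy classes of φ; in particular R(φ) = R(φ_H). -/
/-- Twisted conjugacy relation for a map `f : G → G`. -/
def twistedConj {G : Type*} [Group G] (f : G → G) (x y : G) : Prop :=
  ∃ z : G, x = z * y * (f z)⁻¹

lemma twistedConj_refl {G : Type*} [Group G] (φ : G →* G) (x : G) :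
    twistedConj (⇑φ) x x := ⟨1, by simp⟩

lemma twistedConj_symm {G : Type*} [Group G] (φ : G →* G) {x y : G}
    (h : twistedConj (⇑φ) x y) : twistedConj (⇑φ) y x := by
  obtain ⟨z, hz⟩ := h
  exact ⟨z⁻¹, by rw [hz, map_inv]; group⟩

lemma twistedConj_trans {G : Type*} [Group G] (φ : G →* G) {x y w : G}
    (h1 : twistedConj (⇑φ) x y) (h2 : twistedConj (⇑φ) y w) :
    twistedConj (⇑φ) x w := by
  obtain ⟨z, hz⟩ := h1
  obtain ⟨u, hu⟩ := h2
  exact ⟨z * u, by rw [hz, hu]; simp [mul_assoc]⟩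

lemma twistedConj_of_eqvGen {G : Type*} [Group G] (φ : G →* G) {x y : G}
    (h : Relation.EqvGen (twistedConj (⇑φ)) x y) : twistedConj (⇑φ) x y := by
  induction h with
  | rel _ _ h => exact h
  | refl x => exact twistedConj_refl φ x
  | symm _ _ _ ih => exact twistedConj_symm φ ih
  | trans _ _ _ _ _ ih1 ih2 => exact twistedConj_trans φ ih1 ih2

theorem reidemeister_of_invariant_subgroup {G : Type*} [Group G] (φ : G →* G)
    (H : Subgroup G) (hinv : ∀ h ∈ H, φ h ∈ H)
    (hev : ∀ x : G, ∃ n : ℕ, 0 < n ∧ (⇑φ)^[n] x ∈ H) :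
    ∃ Φ : Quot (twistedConj (fun h : H => (⟨φ h, hinv h h.2⟩ : H))) ≃
          Quot (twistedConj (⇑φ)),
      (∀ h : H, Φ (Quot.mk _ h) = Quot.mk _ (h : G)) ∧
      Nat.card (Quot (twistedConj (fun h : H => (⟨φ h, hinv h h.2⟩ : H)))) =
        Nat.card (Quot (twistedConj (⇑φ))) := by
  classical
  set ψ : H → H := fun h => (⟨φ h, hinv h h.2⟩ : H) with hψ
  have well : ∀ a b : H, twistedConj ψ a b →
      Quot.mk (twistedConj (⇑φ)) (a : G) = Quot.mk _ (b : G) := by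
    rintro a b ⟨z, hz⟩
    apply Quot.sound
    refine ⟨(z : G), ?_⟩
    have := congrArg (Subtype.val) hz
    simpa [hψ] using this
  let F : Quot (twistedConj ψ) → Quot (twistedConj (⇑φ)) :=
    Quot.lift (fun h : H => Quot.mk _ (h : G)) well
  -- every x is twisted conjugate to its iterates
  have hiter : ∀ (n : ℕ) (x : G),
      Quot.mk (twistedConj (⇑φ)) x = Quot.mk _ ((⇑φ)^[n] x) := by
    intro n
    induction n with
    | zero => intro x; rfl
    | succ n ih =>
      intro x
      have h1 : Quot.mk (twistedConj (⇑φ)) x = Quot.mk _ (φ x) :=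
        Quot.sound ⟨x, by group⟩
      rw [h1, ih (φ x), Function.iterate_succ_apply]
  have hsurj : Function.Surjective F := by
    intro q
    induction q using Quot.ind with
    | _ x =>
      obtain ⟨n, _, hx⟩ := hev x
      refine ⟨Quot.mk _ (⟨(⇑φ)^[n] x, hx⟩ : H), ?_⟩
      show Quot.mk (twistedConj (⇑φ)) ((⇑φ)^[n] x) = Quot.mk _ x
      exact (hiter n x).symm
  have hinj : Function.Injective F := by
    intro qa qb
    induction qa using Quot.ind with
    | _ a =>
      induction qb using Quot.ind with
      | _ b =>
        intro hEq
        have hEq' : Quot.mk (twistedConj (⇑φ)) (a : G) = Quot.mk _ (b : G) := hEq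
        have hrel : twistedConj (⇑φ) (a : G) (b : G) :=
          twistedConj_of_eqvGen φ (Quot.eq.mp hEq')
        obtain ⟨z, hz⟩ := hrel
        -- φ z = a⁻¹ * z * b
        have hphiz : φ z = (a : G)⁻¹ * z * (b : G) := by
          have : (a : G) * φ z = z * (b : G) := by
            rw [hz]; group
          calc φ z = (a : G)⁻¹ * ((a : G) * φ z) := by group
            _ = (a : G)⁻¹ * (z * (b : G)) := by rw [this]
            _ = (a : G)⁻¹ * z * (b : G) := by group
        have key : ∀ n : ℕ, ∃ p q : G, p ∈ H ∧ q ∈ H ∧ (⇑φ)^[n] z = p * z * q := by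
          intro n
          induction n with
          | zero => exact ⟨1, 1, H.one_mem, H.one_mem, by simp⟩
          | succ n ih =>
            obtain ⟨p, q, hp, hq, hpq⟩ := ih
            refine ⟨φ p * (a : G)⁻¹, (b : G) * φ q,
              H.mul_mem (hinv p hp) (H.inv_mem a.2),
              H.mul_mem b.2 (hinv q hq), ?_⟩
            rw [Function.iterate_succ_apply', hpq, map_mul, map_mul, hphiz]
            group
        obtain ⟨n, _, hzn⟩ := hev z
        obtain ⟨p, q, hp, hq, hpq⟩ := key n
        have hzH : z ∈ H := by
          have : z = p⁻¹ * ((⇑φ)^[n] z) * q⁻¹ := by rw [hpq]; group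
          rw [this]
          exact H.mul_mem (H.mul_mem (H.inv_mem hp) hzn) (H.inv_mem hq)
        apply Quot.sound
        refine ⟨(⟨z, hzH⟩ : H), ?_⟩
        apply Subtype.ext
        simpa [hψ] using hz
  refine ⟨Equiv.ofBijective F ⟨hinj, hsurj⟩, fun h => rfl, ?_⟩
  exact Nat.card_congr (Equiv.ofBijective F ⟨hinj, hsurj⟩)
end

section
/- Let φ: G → G be an endomorphism and N a normal subgroup of G with φ(N) ⊆ N such that for every x ∈ N there exists n > 0 with φⁿ(x) = e. Then the induced endomorphism φ̄ on G/N satisfies R(φ) = R(φ̄): the projection π: G → G/N induces a bijection between twisted conjugacy classes of φ and of φ̄. -/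
theorem twistedConj_equiv {G : Type*} [Group G] (φ : G →* G) :
    Equivalence (twistedConj (⇑φ)) := by
  constructor
  · intro x; exact ⟨1, by simp⟩
  · rintro x y ⟨z, rfl⟩
    exact ⟨z⁻¹, by simp [mul_assoc]⟩
  · rintro x y w ⟨z, rfl⟩ ⟨u, rfl⟩
    exact ⟨z * u, by simp [mul_assoc]⟩

/-- Key lemma: if some iterate of `φ` kills `n`, then `n * y` is `φ`-twisted
conjugate to `y`. -/
theorem twistedConj_mul_of_iterate {G : Type*} [Group G] (φ : G →* G)
    (y n : G) (m : ℕ) (hm : (⇑φ)^[m] n = 1) : twistedConj (⇑φ) (n * y) y := by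
  -- the `y`-twisted endomorphism
  set ψ : G →* G := ((MulAut.conj y).toMonoidHom.comp φ) with hψ
  have hψ_apply : ∀ g, ψ g = y * φ g * y⁻¹ := fun g => rfl
  -- iterates of ψ are conjugates of iterates of φ
  have hconj : ∀ k x, ∃ c : G, (⇑ψ)^[k] x = c * ((⇑φ)^[k] x) * c⁻¹ := by
    intro k
    induction k with
    | zero => intro x; exact ⟨1, by simp⟩
    | succ k ih =>
      intro x
      obtain ⟨c, hc⟩ := ih x
      refine ⟨ψ c * y, ?_⟩
      rw [Function.iterate_succ_apply', hc, Function.iterate_succ_apply']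
      simp [hψ_apply, mul_assoc]
  have hψm : (⇑ψ)^[m] n = 1 := by
    obtain ⟨c, hc⟩ := hconj m n
    rw [hc, hm]; simp
  -- build the twisting element
  let z : ℕ → G := fun k => Nat.rec 1 (fun _ zk => n * ψ zk) k
  have hz0 : z 0 = 1 := rfl
  have hzs : ∀ k, z (k + 1) = n * ψ (z k) := fun k => rfl
  have hzprod : ∀ k, z (k + 1) = z k * (⇑ψ)^[k] n := by
    intro k
    induction k with
    | zero => rw [hzs, hz0]; simp
    | succ k ih =>
      calc z (k + 1 + 1) = n * ψ (z (k + 1)) := hzs (k + 1)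
        _ = n * ψ (z k * (⇑ψ)^[k] n) := by rw [ih]
        _ = (n * ψ (z k)) * (⇑ψ)^[k + 1] n := by
            rw [map_mul, Function.iterate_succ_apply', mul_assoc]
        _ = z (k + 1) * (⇑ψ)^[k + 1] n := by rw [hzs]
  have key : n = z m * (ψ (z m))⁻¹ := by
    have h1 : z (m + 1) = z m := by rw [hzprod, hψm, mul_one]
    have h2 : z (m + 1) = n * ψ (z m) := hzs m
    rw [h1] at h2
    rw [eq_mul_inv_iff_mul_eq]
    exact h2.symm
  refine ⟨z m, ?_⟩
  rw [hψ_apply] at key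
  calc n * y = (z m * (y * φ (z m) * y⁻¹)⁻¹) * y := by rw [← key]
    _ = z m * y * (φ (z m))⁻¹ := by group

theorem reidemeister_of_quotient {G : Type*} [Group G] (φ : G →* G)
    (N : Subgroup G) [N.Normal] (hinv : ∀ x ∈ N, φ x ∈ N)
    (hker : ∀ x ∈ N, ∃ n : ℕ, 0 < n ∧ (⇑φ)^[n] x = 1)
    (φbar : G ⧸ N →* G ⧸ N)
    (hφbar : ∀ g : G, φbar ((g : G ⧸ N)) = ((φ g : G) : G ⧸ N)) :
    ∃ Φ : Quot (twistedConj (⇑φ)) ≃ Quot (twistedConj (⇑φbar)),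
      (∀ g : G, Φ (Quot.mk _ g) = Quot.mk _ ((g : G ⧸ N))) ∧
      Nat.card (Quot (twistedConj (⇑φ))) = Nat.card (Quot (twistedConj (⇑φbar))) := by
  -- the descended map on twisted conjugacy classes
  have hlift : ∀ x y : G, twistedConj (⇑φ) x y →
      Quot.mk (twistedConj (⇑φbar)) (x : G ⧸ N) = Quot.mk _ (y : G ⧸ N) := by
    rintro x y ⟨z, rfl⟩
    apply Quot.sound
    exact ⟨(z : G ⧸ N), by push_cast [hφbar]; rfl⟩
  let f : Quot (twistedConj (⇑φ)) → Quot (twistedConj (⇑φbar)) :=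
    Quot.lift (fun g => Quot.mk _ ((g : G ⧸ N))) hlift
  have hbij : Function.Bijective f := by
    constructor
    · -- injectivity
      intro a b
      induction a using Quot.ind with | _ x =>
      induction b using Quot.ind with | _ y =>
      intro h
      have h' : twistedConj (⇑φbar) (x : G ⧸ N) (y : G ⧸ N) :=
        ((twistedConj_equiv φbar).eqvGen_iff).mp (Quot.eqvGen_exact h)
      obtain ⟨zbar, hz⟩ := h'
      obtain ⟨z, rfl⟩ := QuotientGroup.mk_surjective zbar
      -- x and w := z * y * φ z ⁻¹ have the same image in G ⧸ N
      set w : G := z * y * (φ z)⁻¹ with hw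
      have hxw : (x : G ⧸ N) = (w : G ⧸ N) := by
        rw [hz, hw]; push_cast [hφbar]; rfl
      have hmem : x * w⁻¹ ∈ N := by
        have h1 : x⁻¹ * w ∈ N := QuotientGroup.eq.mp hxw
        have h2 : w⁻¹ * x ∈ N := by simpa using N.inv_mem h1
        have := Subgroup.Normal.conj_mem ‹N.Normal› _ h2 x
        simpa [mul_assoc] using this
      obtain ⟨m, _, hm⟩ := hker _ hmem
      apply Quot.sound
      have t1 : twistedConj (⇑φ) x w := by
        have := twistedConj_mul_of_iterate φ w (x * w⁻¹) m hm
        simpa [mul_assoc] using this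
      have t2 : twistedConj (⇑φ) w y := ⟨z, rfl⟩
      exact (twistedConj_equiv φ).trans t1 t2
    · -- surjectivity
      intro b
      induction b using Quot.ind with | _ gbar =>
      obtain ⟨g, rfl⟩ := QuotientGroup.mk_surjective gbar
      exact ⟨Quot.mk _ g, rfl⟩
  refine ⟨Equiv.ofBijective f hbij, fun g => rfl, Nat.card_congr (Equiv.ofBijective f hbij)⟩
end

section
/- Let ψ be an automorphism (invertible linear endomorphism) of a finite-dimensional ℚ-vector space. Then the characteristic polynomial of ψ has integer coefficients and constant term ±1 (i.e. ψ is integer-like) if and only if every complex eigenvalue of ψ is an algebraic unit. -/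
open Polynomial

lemma coeff_prod_X_sub_C_integral (s : Multiset ℂ) (hs : ∀ z ∈ s, IsIntegral ℤ z) (k : ℕ) :
    IsIntegral ℤ ((s.map fun z => X - C z).prod.coeff k) := by
  have hrw : (s.map fun z => X - C z) = ((s.map Neg.neg).map fun r => X + C r) := by
    rw [Multiset.map_map]
    exact Multiset.map_congr rfl fun z _ => by simp [sub_eq_add_neg]
  by_cases hk : k ≤ Multiset.card s
  · rw [hrw, Multiset.prod_X_add_C_coeff _ (by simpa using hk)]
    have : (s.map Neg.neg).esymm (Multiset.card (s.map Neg.neg) - k) ∈ integralClosure ℤ ℂ := by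
      apply Subalgebra.multiset_sum_mem
      intro x hx
      simp only [Multiset.mem_map] at hx
      obtain ⟨t, ht, rfl⟩ := hx
      rw [Multiset.mem_powersetCard] at ht
      apply Subalgebra.multiset_prod_mem
      intro y hy
      have := Multiset.mem_of_le ht.1 hy
      simp only [Multiset.mem_map] at this
      obtain ⟨z, hz, rfl⟩ := this
      exact Subalgebra.neg_mem _ (hs z hz)
    exact this
  · have hdeg : ((s.map fun z => X - C z).prod).natDegree = Multiset.card s := by
      rw [natDegree_multiset_prod_X_sub_C_eq_card]
    rw [coeff_eq_zero_of_natDegree_lt (by omega)]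
    exact isIntegral_zero

lemma inv_integral_of_root (q : ℤ[X]) (hq : q.Monic) (hc : q.coeff 0 = 1 ∨ q.coeff 0 = -1)
    {z : ℂ} (hz : z ≠ 0) (hroot : Polynomial.aeval z q = 0) : IsIntegral ℤ z⁻¹ := by
  letI := invertibleOfNonzero hz
  have hrev : Polynomial.aeval (⅟ z) q.reverse = 0 := by
    rw [Polynomial.aeval_def, eval₂_reverse_eq_zero_iff]
    exact hroot
  refine ⟨C (q.coeff 0) * q.reverse, ?_, ?_⟩
  · have h1 : (C (q.coeff 0) * q.reverse).leadingCoeff = q.coeff 0 * q.reverse.leadingCoeff := by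
      rcases hc with h | h <;> simp [h, leadingCoeff_mul]
    have h2 : q.reverse.leadingCoeff = q.coeff 0 := by
      rw [reverse_leadingCoeff, trailingCoeff, Polynomial.natTrailingDegree_eq_zero.2]
      right
      rcases hc with h | h <;> simp [h]
    unfold Monic
    rw [h1, h2]
    rcases hc with h | h <;> simp [h]
  · have : (⅟ z) = z⁻¹ := invOf_eq_inv z
    rw [← Polynomial.aeval_def, ← this, map_mul, hrev, mul_zero]

theorem integerLike_iff_eigenvalues_algebraic_units
    {V : Type*} [AddCommGroup V] [Module ℚ V] [FiniteDimensional ℚ V]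
    (ψ : V →ₗ[ℚ] V) (hψ : Function.Bijective ψ) :
    ((∀ i : ℕ, ∃ n : ℤ, (LinearMap.charpoly ψ).coeff i = (n : ℚ)) ∧
      ((LinearMap.charpoly ψ).coeff 0 = 1 ∨ (LinearMap.charpoly ψ).coeff 0 = -1)) ↔
    (∀ z : ℂ, Polynomial.aeval z (LinearMap.charpoly ψ) = 0 →
      z ≠ 0 ∧ IsIntegral ℤ z ∧ IsIntegral ℤ z⁻¹) := by
  set P := LinearMap.charpoly ψ with hP
  have hPmonic : P.Monic := LinearMap.charpoly_monic ψ
  constructor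
  · rintro ⟨hint, hc0⟩ z hz
    -- lift P to ℤ[X]
    obtain ⟨q, hq⟩ : ∃ q : ℤ[X], q.map (Int.castRingHom ℚ) = P := by
      rw [← Polynomial.mem_lifts, Polynomial.lifts_iff_coeff_lifts]
      intro n
      obtain ⟨m, hm⟩ := hint n
      exact ⟨m, hm.symm⟩
    have hqmonic : q.Monic := by
      apply Polynomial.monic_of_injective (f := Int.castRingHom ℚ)
        (Int.cast_injective)
      rw [hq]; exact hPmonic
    have hqc0 : q.coeff 0 = 1 ∨ q.coeff 0 = -1 := by
      have : ((q.coeff 0 : ℤ) : ℚ) = P.coeff 0 := by rw [← hq]; simp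
      rcases hc0 with h | h
      · left; exact_mod_cast this.trans h
      · right; exact_mod_cast this.trans h
    have hrootq : Polynomial.aeval z q = 0 := by
      have hz' := hz
      rw [← hq, show Int.castRingHom ℚ = algebraMap ℤ ℚ from rfl,
        Polynomial.aeval_map_algebraMap] at hz'
      exact hz'
    have hzne : z ≠ 0 := by
      rintro rfl
      rw [Polynomial.aeval_def, Polynomial.eval₂_at_zero] at hz
      rcases hc0 with h | h <;> rw [h] at hz <;> simp at hz
    exact ⟨hzne, ⟨q, hqmonic, hrootq⟩, inv_integral_of_root q hqmonic hqc0 hzne hrootq⟩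
  · intro h
    set Q := P.map (algebraMap ℚ ℂ) with hQ
    have hQmonic : Q.Monic := hPmonic.map _
    have hQsplit : Q = (Q.roots.map fun a => X - C a).prod :=
      (IsAlgClosed.splits Q).eq_prod_roots_of_monic hQmonic
    have hroots : ∀ z ∈ Q.roots, z ≠ 0 ∧ IsIntegral ℤ z ∧ IsIntegral ℤ z⁻¹ := by
      intro z hzmem
      apply h
      have := Polynomial.isRoot_of_mem_roots hzmem
      rwa [Polynomial.IsRoot, hQ, Polynomial.eval_map, ← Polynomial.aeval_def] at this
    -- coefficients are integral
    have hcoeff : ∀ i : ℕ, IsIntegral ℤ (Q.coeff i) := by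
      intro i
      rw [hQsplit]
      exact coeff_prod_X_sub_C_integral _ (fun z hz => (hroots z hz).2.1) i
    have hintcoeff : ∀ i : ℕ, ∃ n : ℤ, P.coeff i = (n : ℚ) := by
      intro i
      have h1 : IsIntegral ℤ ((algebraMap ℚ ℂ) (P.coeff i)) := by
        have : Q.coeff i = (algebraMap ℚ ℂ) (P.coeff i) := by simp [hQ]
        rw [← this]; exact hcoeff i
      have h2 : IsIntegral ℤ (P.coeff i) :=
        (isIntegral_algebraMap_iff (algebraMap ℚ ℂ).injective).mp h1
      obtain ⟨n, hn⟩ := IsIntegrallyClosed.isIntegral_iff.mp h2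
      exact ⟨n, hn ▸ by simp⟩
    refine ⟨hintcoeff, ?_⟩
    -- constant term is ±1
    obtain ⟨n, hn⟩ := hintcoeff 0
    have hprod : (Q.roots.map fun z => z).prod * (Q.roots.map fun z => z⁻¹).prod = 1 := by
      rw [← Multiset.prod_map_mul]
      rw [show (Q.roots.map fun z => z * z⁻¹) = Q.roots.map fun _ => (1 : ℂ) from
        Multiset.map_congr rfl fun z hz => mul_inv_cancel₀ (hroots z hz).1]
      simp
    have hprodint : IsIntegral ℤ (Q.roots.map fun z => -z).prod := by
      apply Subalgebra.multiset_prod_mem (integralClosure ℤ ℂ)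
      intro x hx
      simp only [Multiset.mem_map] at hx
      obtain ⟨z, hz, rfl⟩ := hx
      exact Subalgebra.neg_mem _ (hroots z hz).2.1
    have hprodinvint : IsIntegral ℤ (Q.roots.map fun z => (-z)⁻¹).prod := by
      apply Subalgebra.multiset_prod_mem (integralClosure ℤ ℂ)
      intro x hx
      simp only [Multiset.mem_map] at hx
      obtain ⟨z, hz, rfl⟩ := hx
      rw [inv_neg]
      exact Subalgebra.neg_mem _ (hroots z hz).2.2
    have hc0Q : Q.coeff 0 = (Q.roots.map fun z => -z).prod := by
      conv_lhs => rw [Polynomial.coeff_zero_eq_eval_zero, hQsplit]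
      rw [Polynomial.eval_multiset_prod, Multiset.map_map]
      exact congrArg Multiset.prod (Multiset.map_congr rfl fun z _ => by simp)
    have hmul : (Q.roots.map fun z => -z).prod * (Q.roots.map fun z => (-z)⁻¹).prod = 1 := by
      rw [← Multiset.prod_map_mul]
      rw [show (Q.roots.map fun z => -z * (-z)⁻¹) = Q.roots.map fun _ => (1 : ℂ) from
        Multiset.map_congr rfl fun z hz => mul_inv_cancel₀ (neg_ne_zero.2 (hroots z hz).1)]
      simp
    have hcn : Q.coeff 0 = (n : ℂ) := by
      rw [hQ, Polynomial.coeff_map, hn]; simp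
    have hinv : (Q.roots.map fun z => (-z)⁻¹).prod = ((n : ℂ))⁻¹ := by
      rw [← hcn, hc0Q]
      exact eq_inv_of_mul_eq_one_left (by rw [mul_comm]; exact hmul)
    have hninv_int : IsIntegral ℤ ((n : ℂ))⁻¹ := hinv ▸ hprodinvint
    have hne : (n : ℂ) ≠ 0 := by
      intro h0
      rw [← hcn, hc0Q] at h0
      rw [h0, zero_mul] at hmul
      exact zero_ne_one hmul
    have hnne : n ≠ 0 := by exact_mod_cast hne
    have : IsIntegral ℤ ((algebraMap ℚ ℂ) ((n : ℚ))⁻¹) := by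
      rwa [show (algebraMap ℚ ℂ) ((n : ℚ))⁻¹ = ((n : ℂ))⁻¹ by push_cast; simp]
    have h2 : IsIntegral ℤ ((n : ℚ))⁻¹ :=
      (isIntegral_algebraMap_iff (algebraMap ℚ ℂ).injective).mp this
    obtain ⟨m, hm⟩ := IsIntegrallyClosed.isIntegral_iff.mp h2
    have hnm : (n : ℚ) * (m : ℚ) = 1 := by
      rw [show ((m : ℚ)) = ((n : ℚ))⁻¹ by exact_mod_cast hm]
      exact mul_inv_cancel₀ (by exact_mod_cast hnne)
    have hnm' : n * m = 1 := by exact_mod_cast hnm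
    have := Int.isUnit_iff.mp (IsUnit.of_mul_eq_one m hnm')
    rcases this with h1 | h1
    · left; rw [hn, h1]; norm_num
    · right; rw [hn, h1]; norm_num
end

section
/- The polynomial p(x) = x⁴ − 2x³ − 2x + 1 has two complex (non-real) roots of absolute value 1 that are not roots of unity, and two real roots neither of which is ±1. In particular, p has no root that is a root of unity. -/
noncomputable section QuarticSection

namespace QuarticAux

/-! ### Auxiliary facts about `√3` and `√(2√3)` -/

lemma hs3 : Real.sqrt 3 ^ 2 = 3 := Real.sq_sqrt (by norm_num)
lemma h1s : 1 < Real.sqrt 3 := by nlinarith [Real.sqrt_nonneg 3, hs3]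

def u : ℝ := Real.sqrt (2 * Real.sqrt 3)

lemma hu2 : u ^ 2 = 2 * Real.sqrt 3 := Real.sq_sqrt (by positivity)
lemma hupos : 0 < u := Real.sqrt_pos.mpr (by positivity)

/-! ### The two non-real roots -/

def A : ℂ := ((1 - Real.sqrt 3) / 2 : ℝ) + (u / 2 : ℝ) * Complex.I
def B : ℂ := ((1 - Real.sqrt 3) / 2 : ℝ) - (u / 2 : ℝ) * Complex.I

lemma hsc : ((Real.sqrt 3 : ℝ) : ℂ) ^ 2 = 3 := by
  rw [← Complex.ofReal_pow, hs3]; norm_num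

lemma huc : ((u : ℝ) : ℂ) ^ 2 = 2 * ((Real.sqrt 3 : ℝ) : ℂ) := by
  rw [← Complex.ofReal_pow, hu2]; push_cast; ring

lemma hAquad : A ^ 2 - (1 - ((Real.sqrt 3 : ℝ) : ℂ)) * A + 1 = 0 := by
  simp only [A]
  push_cast
  linear_combination (((u:ℝ):ℂ) ^ 2 / 4) * Complex.I_sq - (1/4 : ℂ) * huc - (1/4 : ℂ) * hsc

lemma hBquad : B ^ 2 - (1 - ((Real.sqrt 3 : ℝ) : ℂ)) * B + 1 = 0 := by
  simp only [B]
  push_cast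
  linear_combination (((u:ℝ):ℂ) ^ 2 / 4) * Complex.I_sq - (1/4 : ℂ) * huc - (1/4 : ℂ) * hsc

lemma root_of_quad {x : ℂ} (h : x ^ 2 - (1 - ((Real.sqrt 3 : ℝ) : ℂ)) * x + 1 = 0) :
    x ^ 4 - 2 * x ^ 3 - 2 * x + 1 = 0 := by
  linear_combination (x ^ 2 - (1 + ((Real.sqrt 3 : ℝ) : ℂ)) * x + 1) * h + x ^ 2 * hsc

lemma habsA : ‖A‖ = 1 := by
  have hn : Complex.normSq A = 1 := by
    simp only [Complex.normSq_apply, A, Complex.add_re, Complex.add_im, Complex.ofReal_re,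
      Complex.ofReal_im, Complex.mul_re, Complex.mul_im, Complex.I_re, Complex.I_im]
    nlinarith [hs3, hu2]
  rw [Complex.norm_def, hn, Real.sqrt_one]

lemma habsB : ‖B‖ = 1 := by
  have hn : Complex.normSq B = 1 := by
    simp only [Complex.normSq_apply, B, Complex.sub_re, Complex.sub_im, Complex.ofReal_re,
      Complex.ofReal_im, Complex.mul_re, Complex.mul_im, Complex.I_re, Complex.I_im]
    nlinarith [hs3, hu2]
  rw [Complex.norm_def, hn, Real.sqrt_one]

lemma hAim : A.im = u / 2 := by simp [A]
lemma hBim : B.im = -(u / 2) := by simp [B]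

/-! ### The sequence of traces `z^(2^k) + z^(-2^k) = aₖ + bₖ√3` and its
Galois conjugate `vₖ = aₖ - bₖ√3`, which strictly increases from `1 + √3 > 2`. -/

def F : ℕ → ℤ × ℤ
  | 0 => (1, -1)
  | (k+1) => ((F k).1 ^ 2 + 3 * (F k).2 ^ 2 - 2, 2 * (F k).1 * (F k).2)

def V (k : ℕ) : ℝ := ((F k).1 : ℝ) - ((F k).2 : ℝ) * Real.sqrt 3

lemma V_succ (k : ℕ) : V (k+1) = V k ^ 2 - 2 := by
  simp only [V, F]
  push_cast
  linear_combination (-((F k).2 : ℝ) ^ 2) * hs3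

lemma V_gt (k : ℕ) : 2 < V k := by
  induction k with
  | zero => simp [V, F]; linarith [h1s]
  | succ k ih => rw [V_succ]; nlinarith

lemma V_mono : StrictMono V :=
  strictMono_nat_of_lt_succ fun k => by rw [V_succ]; nlinarith [V_gt k]

lemma abs_eq_one_of_pow {x : ℝ} (h0 : 0 ≤ x) {n : ℕ} (hn : 0 < n) (h : x ^ n = 1) : x = 1 := by
  rcases lt_trichotomy x 1 with h1 | h1 | h1
  · nlinarith [pow_lt_one₀ h0 h1 hn.ne']
  · exact h1
  · nlinarith [one_lt_pow₀ h1 hn.ne']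

/-- No root of the quartic is a root of unity. -/
lemma key : ∀ z : ℂ, z ^ 4 - 2 * z ^ 3 - 2 * z + 1 = 0 → ¬ ∃ n : ℕ, 0 < n ∧ z ^ n = 1 := by
  rintro z hz ⟨n, hn, hzn⟩
  have hz0 : z ≠ 0 := by rintro rfl; norm_num at hz
  have habs : ‖z‖ = 1 :=
    abs_eq_one_of_pow (norm_nonneg z) hn (by rw [← norm_pow, hzn, norm_one])
  have hnsq : Complex.normSq z = 1 := by
    rw [Complex.normSq_eq_norm_sq, habs]; norm_num
  have hinv : z⁻¹ = (starRingEnd ℂ) z := by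
    rw [Complex.inv_def, hnsq]; simp
  have htc : ((2 * z.re : ℝ) : ℂ) = z + z⁻¹ := by
    rw [hinv, Complex.add_conj]
  set T : ℝ := 2 * z.re with hT
  have hTc : (T : ℂ) ^ 2 - 2 * T - 2 = 0 := by
    rw [htc]
    field_simp
    linear_combination hz
  have hTr : T ^ 2 - 2 * T - 2 = 0 := by exact_mod_cast hTc
  have hTle : T ≤ 2 := by
    have h1 := Complex.abs_re_le_norm z
    rw [habs] at h1
    have h2 := abs_le.mp h1
    simp only [hT]; linarith [h2.2]
  have hTeq : T = 1 - Real.sqrt 3 := by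
    have hfac : (T - 1 - Real.sqrt 3) * (T - 1 + Real.sqrt 3) = 0 := by
      linear_combination hTr - hs3
    rcases mul_eq_zero.mp hfac with h | h
    · nlinarith [h1s]
    · linarith
  have claimA : ∀ k : ℕ, (((F k).1 : ℂ) + ((F k).2 : ℂ) * (Real.sqrt 3 : ℝ))
      = z ^ (2^k) + (z ^ (2^k))⁻¹ := by
    intro k
    induction k with
    | zero =>
      simp only [F, pow_zero, pow_one]
      rw [← htc, hTeq]
      push_cast
      ring
    | succ k ih =>
      have hw : z ^ (2^k) ≠ 0 := pow_ne_zero _ hz0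
      have h2 : z ^ (2^(k+1)) = (z ^ (2^k)) ^ 2 := by
        rw [← pow_mul, pow_succ]
      rw [h2]
      have h3 : (z ^ (2^k)) ^ 2 + ((z ^ (2^k)) ^ 2)⁻¹
          = (z ^ (2^k) + (z ^ (2^k))⁻¹) ^ 2 - 2 := by
        field_simp
        ring
      rw [h3, ← ih]
      simp only [F]
      push_cast
      linear_combination (-((F k).2 : ℂ) ^ 2) * hsc
  haveI : NeZero n := ⟨hn.ne'⟩
  obtain ⟨j, k, hjk, heq⟩ := Finite.exists_ne_map_eq_of_infinite
    (fun m : ℕ => ((2 ^ m : ℕ) : ZMod n))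
  wlog hlt : j < k generalizing j k
  · exact this k j hjk.symm heq.symm (hjk.lt_or_gt.resolve_left hlt)
  have hmod : (2:ℕ) ^ j ≡ 2 ^ k [MOD n] := (ZMod.natCast_eq_natCast_iff _ _ _).mp heq
  have hle : (2:ℕ) ^ j ≤ 2 ^ k := Nat.pow_le_pow_right (by norm_num) hlt.le
  obtain ⟨m, hm⟩ := (Nat.modEq_iff_dvd' hle).mp hmod
  have hpow : z ^ (2^k) = z ^ (2^j) := by
    have h4 : (2:ℕ)^k = 2^j + n * m := by omega
    rw [h4, pow_add, pow_mul, hzn, one_pow, mul_one]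
  have hAB : (((F j).1 : ℝ) + ((F j).2 : ℝ) * Real.sqrt 3)
      = ((F k).1 : ℝ) + ((F k).2 : ℝ) * Real.sqrt 3 := by
    have := (claimA j).trans ((hpow ▸ (claimA k)).symm)
    exact_mod_cast this
  have h3irr : Irrational (Real.sqrt 3) := by
    simpa using (Nat.prime_three).irrational_sqrt
  have hb : (F j).2 = (F k).2 := by
    by_contra hne
    apply h3irr
    refine ⟨(((F j).1 - (F k).1 : ℤ) : ℚ) / (((F k).2 - (F j).2 : ℤ) : ℚ), ?_⟩
    have hd : ((F k).2 : ℝ) - ((F j).2 : ℝ) ≠ 0 := by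
      intro h
      apply hne
      have h5 : ((F j).2 : ℝ) = (F k).2 := by linarith
      exact_mod_cast h5
    push_cast
    field_simp
    linarith
  have ha : (F j).1 = (F k).1 := by
    have : ((F j).1 : ℝ) = (F k).1 := by
      rw [hb] at hAB; linarith
    exact_mod_cast this
  have hVjk : V j = V k := by
    simp only [V, ha, hb]
  exact absurd hVjk (V_mono hlt).ne

/-- The two real roots, via the intermediate value theorem. -/
lemma real_roots : ∃ c d : ℝ, c ≠ d ∧
    c ^ 4 - 2 * c ^ 3 - 2 * c + 1 = 0 ∧ d ^ 4 - 2 * d ^ 3 - 2 * d + 1 = 0 ∧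
    c ≠ 1 ∧ c ≠ -1 ∧ d ≠ 1 ∧ d ≠ -1 := by
  set f : ℝ → ℝ := fun x => x ^ 4 - 2 * x ^ 3 - 2 * x + 1 with hf
  have hcont : Continuous f := by fun_prop
  have h1 : (0 : ℝ) ∈ Set.Icc (f 2) (f 3) := by norm_num [hf]
  obtain ⟨c, hcmem, hfc⟩ := intermediate_value_Icc (by norm_num : (2:ℝ) ≤ 3)
    hcont.continuousOn h1
  have h2 : (0 : ℝ) ∈ Set.Icc (f 1) (f 0) := by norm_num [hf]
  obtain ⟨d, hdmem, hfd⟩ := intermediate_value_Icc' (by norm_num : (0:ℝ) ≤ 1)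
    hcont.continuousOn h2
  refine ⟨c, d, ?_, hfc, hfd, ?_, ?_, ?_, ?_⟩
  · rintro rfl; exact absurd (hcmem.1.trans hdmem.2) (by norm_num)
  · rintro rfl; exact absurd hcmem.1 (by norm_num)
  · rintro rfl; exact absurd hcmem.1 (by norm_num)
  · rintro rfl; norm_num [hf] at hfd
  · rintro rfl; exact absurd hdmem.1 (by norm_num)

end QuarticAux

end QuarticSection

open QuarticAux

theorem roots_of_quartic :
    (∃ a b : ℂ, a ≠ b ∧ a.im ≠ 0 ∧ b.im ≠ 0 ∧
      a ^ 4 - 2 * a ^ 3 - 2 * a + 1 = 0 ∧ b ^ 4 - 2 * b ^ 3 - 2 * b + 1 = 0 ∧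
      ‖a‖ = 1 ∧ ‖b‖ = 1 ∧
      (¬ ∃ n : ℕ, 0 < n ∧ a ^ n = 1) ∧ (¬ ∃ n : ℕ, 0 < n ∧ b ^ n = 1)) ∧
    (∃ c d : ℝ, c ≠ d ∧
      c ^ 4 - 2 * c ^ 3 - 2 * c + 1 = 0 ∧ d ^ 4 - 2 * d ^ 3 - 2 * d + 1 = 0 ∧
      c ≠ 1 ∧ c ≠ -1 ∧ d ≠ 1 ∧ d ≠ -1) ∧
    (∀ z : ℂ, z ^ 4 - 2 * z ^ 3 - 2 * z + 1 = 0 → ¬ ∃ n : ℕ, 0 < n ∧ z ^ n = 1) := by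
  have hArt : A ^ 4 - 2 * A ^ 3 - 2 * A + 1 = 0 := root_of_quad hAquad
  have hBrt : B ^ 4 - 2 * B ^ 3 - 2 * B + 1 = 0 := root_of_quad hBquad
  refine ⟨⟨A, B, ?_, ?_, ?_, hArt, hBrt, habsA, habsB, key A hArt, key B hBrt⟩,
    real_roots, key⟩
  · intro h
    have := congrArg Complex.im h
    rw [hAim, hBim] at this
    linarith [hupos]
  · rw [hAim]
    have := hupos
    intro h
    linarith
  · rw [hBim]
    have := hupos
    intro h
    rw [neg_eq_zero] at h
    linarith
end

section
/- The integer matrix A = [[0,0,0,−1],[1,0,0,2],[0,1,0,0],[0,0,1,2]] has characteristic polynomial x⁴ − 2x³ − 2x + 1 and determinant ±1, and no eigenvalue of A is a root of unity; hence for every n > 0, the matrix Aⁿ − I is invertible over ℚ. -/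
open Polynomial

/-- Integer pair sequence: `t_k = p_k + c * q_k` where `t_k = x^k + x^{-k}`,
`x + x⁻¹ = 1 + c`, `c² = 3`. -/
def auxPQ : ℕ → ℤ × ℤ
  | 0 => (2, 0)
  | 1 => (1, 1)
  | (k+2) =>
    ((auxPQ (k+1)).1 + 3 * (auxPQ (k+1)).2 - (auxPQ k).1,
     (auxPQ (k+1)).1 + (auxPQ (k+1)).2 - (auxPQ k).2)

lemma auxPQ_spec {F : Type*} [Field F] (x c : F) (hx : x ≠ 0)
    (hc : c ^ 2 = 3) (h : x ^ 2 + 1 = (1 + c) * x) (k : ℕ) :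
    x ^ k + x⁻¹ ^ k = ((auxPQ k).1 : F) + c * ((auxPQ k).2 : F) := by
  have hxy : x * x⁻¹ = 1 := mul_inv_cancel₀ hx
  have hsum : x + x⁻¹ = 1 + c := by
    field_simp
    linear_combination h
  induction k using Nat.twoStepInduction with
  | zero => norm_num [auxPQ]
  | one => simpa [auxPQ] using hsum
  | more k ih2 ih1 =>
    have key : x ^ (k+2) + x⁻¹ ^ (k+2)
        = (x + x⁻¹) * (x ^ (k+1) + x⁻¹ ^ (k+1)) - (x * x⁻¹) * (x ^ k + x⁻¹ ^ k) := by
      ring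
    rw [key, hsum, hxy, ih1, ih2]
    show _ = ((auxPQ (k+2)).1 : F) + c * ((auxPQ (k+2)).2 : F)
    simp only [auxPQ]
    push_cast
    linear_combination ((auxPQ (k+1)).2 : F) * hc

lemma aux_eval_charpoly {n : Type*} [Fintype n] [DecidableEq n]
    (M : Matrix n n ℂ) (x : ℂ) :
    (Matrix.charpoly M).eval x = Matrix.det (algebraMap ℂ (Matrix n n ℂ) x - M) := by
  rw [Matrix.charpoly, ← coe_evalRingHom, RingHom.map_det]
  congr 1
  ext i j
  by_cases h : i = j <;>
    simp [Matrix.charmatrix_apply, Matrix.diagonal_apply, Matrix.algebraMap_matrix_apply, h]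

/-- `p ± √3 q = 2` forces `q = 0` and `p = 2` by irrationality of `√3`. -/
lemma aux_pq_eq (p q : ℤ) (hε : (p : ℝ) + Real.sqrt 3 * q = 2 ∨ (p : ℝ) - Real.sqrt 3 * q = 2) :
    p = 2 ∧ q = 0 := by
  have h3 : Irrational (Real.sqrt 3) := (Nat.prime_three).irrational_sqrt
  have hq : q = 0 := by
    by_contra hq
    have hq' : (q : ℝ) ≠ 0 := Int.cast_ne_zero.2 hq
    rcases hε with h | h
    · have hsq : Real.sqrt 3 = (2 - (p:ℝ)) / q := by
        rw [eq_div_iff hq']; linarith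
      exact h3 ⟨(2 - p) / q, by push_cast; rw [hsq]⟩
    · have hsq : Real.sqrt 3 = ((p:ℝ) - 2) / q := by
        rw [eq_div_iff hq']; linarith
      exact h3 ⟨(p - 2) / q, by push_cast; rw [hsq]⟩
  subst hq
  refine ⟨?_, rfl⟩
  have : (p : ℝ) = 2 := by rcases hε with h | h <;> simpa using h
  exact_mod_cast this

/-- No root of `X⁴ - 2X³ - 2X + 1` is a root of unity. -/
lemma aux_no_root_of_unity (z : ℂ) (hz : z ^ 4 - 2 * z ^ 3 - 2 * z + 1 = 0) :
    ¬ ∃ n : ℕ, 0 < n ∧ z ^ n = 1 := by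
  rintro ⟨n, hn, hzn⟩
  have hz0 : z ≠ 0 := by
    rintro rfl
    norm_num at hz
  -- the real quadratic surd setup
  set s : ℝ := Real.sqrt 3 with hs_def
  have hs : s ^ 2 = 3 := Real.sq_sqrt (by norm_num)
  have hs_pos : 1 < s := by
    have h1 : (1:ℝ) = Real.sqrt 1 := (Real.sqrt_one).symm
    rw [h1, hs_def]
    exact Real.sqrt_lt_sqrt (by norm_num) (by norm_num)
  set d : ℝ := Real.sqrt (2 * s) with hd_def
  have hd : d ^ 2 = 2 * s := Real.sq_sqrt (by positivity)
  have hd_nonneg : 0 ≤ d := Real.sqrt_nonneg _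
  set w : ℝ := (1 + s + d) / 2 with hw_def
  have hw1 : 1 < w := by
    rw [hw_def]; nlinarith
  have hw0 : w ≠ 0 := by positivity
  have hw_eq : w ^ 2 + 1 = (1 + s) * w := by
    rw [hw_def]
    field_simp
    nlinarith [hd, hs]
  -- z side: c = z + z⁻¹ - 1 satisfies c² = 3
  have hzz : z * z⁻¹ = 1 := mul_inv_cancel₀ hz0
  set c : ℂ := z + z⁻¹ - 1 with hc_def
  have hz_eq : z ^ 2 + 1 = (1 + c) * z := by
    rw [hc_def]
    field_simp
    ring
  have hc2 : c ^ 2 = 3 := by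
    have h2 : z ^ 2 * (c ^ 2 - 3) = 0 := by
      rw [hc_def]
      linear_combination hz + (z * z⁻¹ + 2 * z ^ 2 - 2 * z + 1) * hzz
    have := mul_eq_zero.1 h2
    rcases this with h | h
    · exact absurd h (pow_ne_zero 2 hz0)
    · linear_combination h
  -- the complex casting of s
  have hsC : ((s : ℂ)) ^ 2 = 3 := by
    have := hs
    exact_mod_cast congrArg (fun t : ℝ => (t : ℂ)) this
  -- c = ±√3 (as complex numbers)
  have hc_cases : c = (s : ℂ) ∨ c = -(s : ℂ) := by
    have hfac : (c - s) * (c + s) = 0 := by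
      linear_combination hc2 - hsC
    rcases mul_eq_zero.1 hfac with h | h
    · left; linear_combination h
    · right; linear_combination h
  -- t_n(z) = 2
  have hzinv : z⁻¹ ^ n = 1 := by
    rw [inv_pow, hzn, inv_one]
  -- get p_n = 2, q_n = 0
  obtain ⟨hp, hq⟩ : (auxPQ n).1 = 2 ∧ (auxPQ n).2 = 0 := by
    apply aux_pq_eq
    rcases hc_cases with h | h
    · left
      have := auxPQ_spec z ((s:ℂ)) hz0 hsC (by rw [← h]; exact hz_eq) n
      rw [hzn, hzinv] at this
      have h2 : ((((auxPQ n).1 : ℝ) + Real.sqrt 3 * ((auxPQ n).2 : ℝ) : ℝ) : ℂ) = ((2:ℝ) : ℂ) := by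
        push_cast
        linear_combination -this
      exact_mod_cast h2
    · right
      have := auxPQ_spec z (-(s:ℂ)) hz0 (by rw [neg_pow]; simpa using hsC)
        (by rw [← h]; exact hz_eq) n
      rw [hzn, hzinv] at this
      have h2 : ((((auxPQ n).1 : ℝ) - Real.sqrt 3 * ((auxPQ n).2 : ℝ) : ℝ) : ℂ) = ((2:ℝ) : ℂ) := by
        push_cast
        linear_combination -this
      exact_mod_cast h2
  -- w side gives a contradiction
  have hw := auxPQ_spec w s hw0 hs hw_eq n
  rw [hp, hq] at hw
  have hwn : 1 < w ^ n := one_lt_pow₀ hw1 hn.ne'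
  have hwinv : w⁻¹ ^ n = (w ^ n)⁻¹ := by rw [inv_pow]
  rw [hwinv] at hw
  have hwn0 : (0:ℝ) < w ^ n := by linarith
  have : w ^ n + (w ^ n)⁻¹ > 2 := by
    have hinv : w ^ n * (w ^ n)⁻¹ = 1 := mul_inv_cancel₀ (ne_of_gt hwn0)
    nlinarith [sq_nonneg (w ^ n - 1)]
  simp only [Int.cast_ofNat, Int.cast_zero, mul_zero, add_zero] at hw
  linarith [hw, this]

theorem matrix_A_properties :
    let A : Matrix (Fin 4) (Fin 4) ℤ :=
      !![0, 0, 0, -1; 1, 0, 0, 2; 0, 1, 0, 0; 0, 0, 1, 2]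
    Matrix.charpoly A =
      Polynomial.X ^ 4 - 2 * Polynomial.X ^ 3 - 2 * Polynomial.X + 1 ∧
    (A.det = 1 ∨ A.det = -1) ∧
    (∀ z : ℂ, Polynomial.aeval z (Matrix.charpoly A) = 0 →
      ¬ ∃ n : ℕ, 0 < n ∧ z ^ n = 1) ∧
    (∀ n : ℕ, 0 < n → ((A.map (Int.cast : ℤ → ℚ)) ^ n - 1).det ≠ 0) := by
  intro A
  have hch : Matrix.charpoly A = X ^ 4 - 2 * X ^ 3 - 2 * X + 1 := by
    rw [Matrix.charpoly]
    have h : Matrix.charmatrix A =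
        !![(X:ℤ[X]), 0, 0, C 1; C (-1), X, 0, C (-2); 0, C (-1), X, 0; 0, 0, C (-1), X - C 2] := by
      ext i j
      fin_cases i <;> fin_cases j <;>
        simp [A, Matrix.charmatrix_apply, Matrix.diagonal_apply, Matrix.vecHead, Matrix.vecTail]
    rw [h]
    simp [Matrix.det_succ_row_zero, Fin.sum_univ_succ, Matrix.vecHead, Matrix.vecTail,
      show (Fin.castSucc 2 : Fin 4) = 2 from rfl,
      show Fin.succAbove (3 : Fin 4) (2 : Fin 3) = 2 from rfl]
    ring
  -- key fact: roots of the charpoly are not roots of unity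
  have hroots : ∀ z : ℂ, Polynomial.aeval z (Matrix.charpoly A) = 0 →
      ¬ ∃ n : ℕ, 0 < n ∧ z ^ n = 1 := by
    intro z hz
    rw [hch] at hz
    simp only [map_add, map_sub, map_mul, map_pow, map_ofNat, aeval_X, map_one] at hz
    exact aux_no_root_of_unity z (by linear_combination hz)
  refine ⟨hch, ?_, hroots, ?_⟩
  · left
    have := Matrix.det_eq_sign_charpoly_coeff A
    rw [hch] at this
    simpa using this
  · intro n hn hdet
    set B : Matrix (Fin 4) (Fin 4) ℂ := A.map (Int.cast : ℤ → ℂ) with hB_def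
    have hBmap : B = ((algebraMap ℚ ℂ : ℚ →+* ℂ)).mapMatrix (A.map (Int.cast : ℤ → ℚ)) := by
      rw [hB_def]
      ext i j
      simp
    have hdetC : (B ^ n - 1).det = 0 := by
      rw [hBmap, ← map_pow, ← map_one (RingHom.mapMatrix (algebraMap ℚ ℂ) :
        Matrix (Fin 4) (Fin 4) ℚ →+* Matrix (Fin 4) (Fin 4) ℂ), ← map_sub,
        ← RingHom.map_det, hdet, map_zero]
    have h1mem : (1 : ℂ) ∈ spectrum ℂ (B ^ n) := by
      rw [spectrum.mem_iff]
      intro hu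
      rw [Matrix.isUnit_iff_isUnit_det] at hu
      have : ((algebraMap ℂ (Matrix (Fin 4) (Fin 4) ℂ)) 1 - B ^ n).det = 0 := by
        have : (algebraMap ℂ (Matrix (Fin 4) (Fin 4) ℂ)) 1 - B ^ n = -(B ^ n - 1) := by
          simp
        rw [this, Matrix.det_neg, hdetC]
        simp
      rw [this] at hu
      exact hu.ne_zero rfl
    have hBn : B ^ n = aeval B (X ^ n : ℂ[X]) := by simp
    rw [hBn] at h1mem
    rw [spectrum.map_polynomial_aeval_of_degree_pos B (X ^ n : ℂ[X])
      (by rw [degree_X_pow]; exact_mod_cast hn)] at h1mem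
    obtain ⟨μ, hμ, hμn⟩ := h1mem
    simp only [eval_pow, eval_X] at hμn
    -- μ is a root of the charpoly
    have hnu : ¬ IsUnit ((algebraMap ℂ (Matrix (Fin 4) (Fin 4) ℂ)) μ - B) := spectrum.mem_iff.1 hμ
    have hdet0 : ((algebraMap ℂ (Matrix (Fin 4) (Fin 4) ℂ)) μ - B).det = 0 := by
      by_contra h
      exact hnu ((Matrix.isUnit_iff_isUnit_det _).2 (isUnit_iff_ne_zero.2 h))
    have heval : (Matrix.charpoly B).eval μ = 0 := by
      rw [aux_eval_charpoly, hdet0]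
    have hchB : Matrix.charpoly B = (Matrix.charpoly A).map (Int.castRingHom ℂ) := by
      rw [hB_def]
      exact Matrix.charpoly_map A (Int.castRingHom ℂ)
    have haev : Polynomial.aeval μ (Matrix.charpoly A) = 0 := by
      rw [aeval_def, ← eval_map]
      rw [hchB] at heval
      exact heval
    exact hroots μ haev ⟨n, hn, hμn⟩
end
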